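/- arXiv:2007.01995 — 2 statements merged into one kernel-verified Lean document; each statement's English description precedes it below -/
import Mathlib

section
/- Backward state marginal recursion bound: if two backward Markov dynamics have conditional transition kernels whose expected TV distance under the first chain's time-(t+1) state-action marginal is at most ε_m, and the backward policies differ in TV by at most ε_π uniformly over states, then the TV distance between the time-t state marginals satisfies D_TV(p1^t || p2^t) ≤ ε_m + ε_π + D_TV(p1^{t+1} || p2^{t+1}). -/
/-!
Write `p₁ᵗ - p₂ᵗ` as a difference of mixtures of the kernels `T₁, T₂` with weights the
joint state-action marginals `w₁ = μ₁ π₁` and `w₂ = μ₂ π₂`, and split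
`w₁ T₁ - w₂ T₂ = w₁ (T₁ - T₂) + (w₁ - w₂) T₂`. In ℓ¹ the first part is at most twice the
expected kernel distance, `2 εm`; since `T₂` is stochastic, the second is at most `‖w₁ - w₂‖₁`. The same
split `μ₁ π₁ - μ₂ π₂ = μ₁ (π₁ - π₂) + (μ₁ - μ₂) π₂` bounds `‖w₁ - w₂‖₁` by
`2 επ + ‖μ₁ - μ₂‖₁`.
-/

open Finset

theorem abs_mul_sub_mul_le {a₁ a₂ b₁ b₂ : ℝ} (ha₁ : 0 ≤ a₁) (hb₂ : 0 ≤ b₂) :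
    |a₁ * b₁ - a₂ * b₂| ≤ a₁ * |b₁ - b₂| + |a₁ - a₂| * b₂ :=
  calc |a₁ * b₁ - a₂ * b₂| = |a₁ * (b₁ - b₂) + (a₁ - a₂) * b₂| := by ring_nf
    _ ≤ |a₁ * (b₁ - b₂)| + |(a₁ - a₂) * b₂| := abs_add_le _ _
    _ = a₁ * |b₁ - b₂| + |a₁ - a₂| * b₂ := by
      rw [abs_mul, abs_mul, abs_of_nonneg ha₁, abs_of_nonneg hb₂]

section Mixture

variable {ι κ : Type*} [Fintype ι] [Fintype κ]

theorem sum_sum_abs_mul_sub_mul_le (f₁ f₂ : ι → ℝ) (g₁ g₂ : ι → κ → ℝ) (hf₁ : ∀ i, 0 ≤ f₁ i)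
    (hg₂ : ∀ i j, 0 ≤ g₂ i j) (hg₂_sum : ∀ i, ∑ j, g₂ i j = 1) :
    ∑ i, ∑ j, |f₁ i * g₁ i j - f₂ i * g₂ i j| ≤
      ∑ i, f₁ i * ∑ j, |g₁ i j - g₂ i j| + ∑ i, |f₁ i - f₂ i| :=
  calc ∑ i, ∑ j, |f₁ i * g₁ i j - f₂ i * g₂ i j|
      ≤ ∑ i, ∑ j, (f₁ i * |g₁ i j - g₂ i j| + |f₁ i - f₂ i| * g₂ i j) := by
        gcongr with i _ j _
        exact abs_mul_sub_mul_le (hf₁ i) (hg₂ i j)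
    _ = ∑ i, f₁ i * ∑ j, |g₁ i j - g₂ i j| + ∑ i, |f₁ i - f₂ i| := by
        simp only [sum_add_distrib, ← mul_sum, hg₂_sum, mul_one]

theorem sum_abs_sum_mul_sub_sum_mul_le (f₁ f₂ : ι → ℝ) (g₁ g₂ : ι → κ → ℝ)
    (hf₁ : ∀ i, 0 ≤ f₁ i) (hg₂ : ∀ i j, 0 ≤ g₂ i j) (hg₂_sum : ∀ i, ∑ j, g₂ i j = 1) :
    ∑ j, |∑ i, f₁ i * g₁ i j - ∑ i, f₂ i * g₂ i j| ≤
      ∑ i, f₁ i * ∑ j, |g₁ i j - g₂ i j| + ∑ i, |f₁ i - f₂ i| :=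
  calc ∑ j, |∑ i, f₁ i * g₁ i j - ∑ i, f₂ i * g₂ i j|
      ≤ ∑ j, ∑ i, |f₁ i * g₁ i j - f₂ i * g₂ i j| := by
        gcongr with j _
        rw [← sum_sub_distrib]
        exact abs_sum_le_sum_abs _ _
    _ = ∑ i, ∑ j, |f₁ i * g₁ i j - f₂ i * g₂ i j| := sum_comm
    _ ≤ _ := sum_sum_abs_mul_sub_mul_le f₁ f₂ g₁ g₂ hf₁ hg₂ hg₂_sum

end Mixture

theorem backward_state_marginal_distance_bound_general
    {S A : Type*} [Fintype S] [Fintype A]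
    (μ₁ μ₂ : S → ℝ) (π₁ π₂ : S → A → ℝ) (T₁ T₂ : S → A → S → ℝ)
    (εm επ : ℝ)
    (hμ₁ : ∀ s, 0 ≤ μ₁ s)
    (hμ₁s : ∑ s, μ₁ s = 1)
    (hπ₁ : ∀ s a, 0 ≤ π₁ s a) (hπ₂ : ∀ s a, 0 ≤ π₂ s a)
    (hπ₂s : ∀ s, ∑ a, π₂ s a = 1)
    (hT₂ : ∀ s' a s, 0 ≤ T₂ s' a s)
    (hT₂s : ∀ s' a, ∑ s, T₂ s' a s = 1)
    (hm : ∑ s', ∑ a, μ₁ s' * π₁ s' a *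
        ((1 / 2) * ∑ s, |T₁ s' a s - T₂ s' a s|) ≤ εm)
    (hπ : ∀ s', (1 / 2) * ∑ a, |π₁ s' a - π₂ s' a| ≤ επ) :
    (1 / 2) * ∑ s, |(∑ s', ∑ a, μ₁ s' * π₁ s' a * T₁ s' a s) -
        (∑ s', ∑ a, μ₂ s' * π₂ s' a * T₂ s' a s)| ≤
      εm + επ + (1 / 2) * ∑ s, |μ₁ s - μ₂ s| := by
  have hstep := sum_abs_sum_mul_sub_sum_mul_le (ι := S × A)
    (fun p ↦ μ₁ p.1 * π₁ p.1 p.2) (fun p ↦ μ₂ p.1 * π₂ p.1 p.2)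
    (fun p ↦ T₁ p.1 p.2) (fun p ↦ T₂ p.1 p.2)
    (fun p ↦ mul_nonneg (hμ₁ p.1) (hπ₁ p.1 p.2)) (fun p ↦ hT₂ p.1 p.2) (fun p ↦ hT₂s p.1 p.2)
  simp only [Fintype.sum_prod_type] at hstep
  have hjoint := sum_sum_abs_mul_sub_mul_le μ₁ μ₂ π₁ π₂ hμ₁ hπ₂ hπ₂s
  have hpolicy : ∑ s', μ₁ s' * ∑ a, |π₁ s' a - π₂ s' a| ≤ 2 * επ :=
    calc ∑ s', μ₁ s' * ∑ a, |π₁ s' a - π₂ s' a| ≤ ∑ s', μ₁ s' * (2 * επ) := by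
          gcongr with s' _
          · exact hμ₁ s'
          · linarith [hπ s']
      _ = 2 * επ := by rw [← sum_mul, hμ₁s, one_mul]
  have hkernel : ∑ s', ∑ a, μ₁ s' * π₁ s' a * ∑ s, |T₁ s' a s - T₂ s' a s| ≤ 2 * εm := by
    simp only [mul_left_comm _ (1 / 2 : ℝ), ← mul_sum] at hm
    linarith
  linarith

/-- Backward state marginal recursion bound. -/
theorem backward_state_marginal_distance_bound
    {S A : Type*} [Fintype S] [Fintype A]
    (μ₁ μ₂ : S → ℝ) (π₁ π₂ : S → A → ℝ) (T₁ T₂ : S → A → S → ℝ)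
    (εm επ : ℝ)
    (hμ₁ : ∀ s, 0 ≤ μ₁ s) (hμ₂ : ∀ s, 0 ≤ μ₂ s)
    (hμ₁s : ∑ s, μ₁ s = 1) (hμ₂s : ∑ s, μ₂ s = 1)
    (hπ₁ : ∀ s a, 0 ≤ π₁ s a) (hπ₂ : ∀ s a, 0 ≤ π₂ s a)
    (hπ₁s : ∀ s, ∑ a, π₁ s a = 1) (hπ₂s : ∀ s, ∑ a, π₂ s a = 1)
    (hT₁ : ∀ s' a s, 0 ≤ T₁ s' a s) (hT₂ : ∀ s' a s, 0 ≤ T₂ s' a s)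
    (hT₁s : ∀ s' a, ∑ s, T₁ s' a s = 1) (hT₂s : ∀ s' a, ∑ s, T₂ s' a s = 1)
    (hm : ∑ s', ∑ a, μ₁ s' * π₁ s' a *
        ((1 / 2) * ∑ s, |T₁ s' a s - T₂ s' a s|) ≤ εm)
    (hπ : ∀ s', (1 / 2) * ∑ a, |π₁ s' a - π₂ s' a| ≤ επ) :
    (1 / 2) * ∑ s, |(∑ s', ∑ a, μ₁ s' * π₁ s' a * T₁ s' a s) -
        (∑ s', ∑ a, μ₂ s' * π₂ s' a * T₂ s' a s)| ≤
      εm + επ + (1 / 2) * ∑ s, |μ₁ s - μ₂ s| :=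
  backward_state_marginal_distance_bound_general μ₁ μ₂ π₁ π₂ T₁ T₂ εm επ hμ₁ hμ₁s hπ₁ hπ₂ hπ₂s hT₂
    hT₂s hm hπ
end

section
/- Forward state marginal recursion bound: under the analogous forward setting, if the expected TV distance of the forward transition kernels under the first chain's time-(t-1) state-action distribution is at most ε_m and the policies differ in TV by at most ε_π uniformly, then D_TV(p1^t || p2^t) ≤ ε_m + ε_π + D_TV(p1^{t-1} || p2^{t-1}). -/
/-- Forward state marginal recursion bound. -/
theorem forward_state_marginal_distance_bound
    {S A : Type*} [Fintype S] [Fintype A]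
    (ν₁ ν₂ : S → ℝ) (π₁ π₂ : S → A → ℝ) (P₁ P₂ : S → A → S → ℝ)
    (εm επ : ℝ)
    (hν₁ : ∀ s, 0 ≤ ν₁ s) (hν₂ : ∀ s, 0 ≤ ν₂ s)
    (hν₁s : ∑ s, ν₁ s = 1) (hν₂s : ∑ s, ν₂ s = 1)
    (hπ₁ : ∀ s a, 0 ≤ π₁ s a) (hπ₂ : ∀ s a, 0 ≤ π₂ s a)
    (hπ₁s : ∀ s, ∑ a, π₁ s a = 1) (hπ₂s : ∀ s, ∑ a, π₂ s a = 1)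
    (hP₁ : ∀ s₀ a s, 0 ≤ P₁ s₀ a s) (hP₂ : ∀ s₀ a s, 0 ≤ P₂ s₀ a s)
    (hP₁s : ∀ s₀ a, ∑ s, P₁ s₀ a s = 1) (hP₂s : ∀ s₀ a, ∑ s, P₂ s₀ a s = 1)
    (hm : ∑ s₀, ∑ a, ν₁ s₀ * π₁ s₀ a *
        ((1 / 2) * ∑ s, |P₁ s₀ a s - P₂ s₀ a s|) ≤ εm)
    (hπ : ∀ s₀, (1 / 2) * ∑ a, |π₁ s₀ a - π₂ s₀ a| ≤ επ) :
    (1 / 2) * ∑ s, |(∑ s₀, ∑ a, ν₁ s₀ * π₁ s₀ a * P₁ s₀ a s) -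
        (∑ s₀, ∑ a, ν₂ s₀ * π₂ s₀ a * P₂ s₀ a s)| ≤
      εm + επ + (1 / 2) * ∑ s, |ν₁ s - ν₂ s| := by
  -- pointwise triangle inequality bound
  have key : ∀ s, |(∑ s₀, ∑ a, ν₁ s₀ * π₁ s₀ a * P₁ s₀ a s) -
        (∑ s₀, ∑ a, ν₂ s₀ * π₂ s₀ a * P₂ s₀ a s)| ≤
      ∑ s₀, ∑ a, (ν₁ s₀ * π₁ s₀ a * |P₁ s₀ a s - P₂ s₀ a s|
        + ν₁ s₀ * |π₁ s₀ a - π₂ s₀ a| * P₂ s₀ a s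
        + |ν₁ s₀ - ν₂ s₀| * π₂ s₀ a * P₂ s₀ a s) := by
    intro s
    have h1 : (∑ s₀, ∑ a, ν₁ s₀ * π₁ s₀ a * P₁ s₀ a s) -
        (∑ s₀, ∑ a, ν₂ s₀ * π₂ s₀ a * P₂ s₀ a s) =
        ∑ s₀, ∑ a, (ν₁ s₀ * π₁ s₀ a * (P₁ s₀ a s - P₂ s₀ a s)
          + ν₁ s₀ * (π₁ s₀ a - π₂ s₀ a) * P₂ s₀ a s
          + (ν₁ s₀ - ν₂ s₀) * π₂ s₀ a * P₂ s₀ a s) := by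
      rw [← Finset.sum_sub_distrib]
      refine Finset.sum_congr rfl fun s₀ _ => ?_
      rw [← Finset.sum_sub_distrib]
      exact Finset.sum_congr rfl fun a _ => by ring
    rw [h1]
    refine (Finset.abs_sum_le_sum_abs _ _).trans (Finset.sum_le_sum fun s₀ _ => ?_)
    refine (Finset.abs_sum_le_sum_abs _ _).trans (Finset.sum_le_sum fun a _ => ?_)
    refine (abs_add_three _ _ _).trans ?_
    gcongr
    · rw [abs_mul, abs_mul, abs_of_nonneg (hν₁ s₀), abs_of_nonneg (hπ₁ s₀ a)]
    · rw [abs_mul, abs_mul, abs_of_nonneg (hν₁ s₀), abs_of_nonneg (hP₂ s₀ a s)]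
    · rw [abs_mul, abs_mul, abs_of_nonneg (hπ₂ s₀ a), abs_of_nonneg (hP₂ s₀ a s)]
  -- exchange sums and integrate out
  have h2 : ∑ s, ∑ s₀, ∑ a, (ν₁ s₀ * π₁ s₀ a * |P₁ s₀ a s - P₂ s₀ a s|
        + ν₁ s₀ * |π₁ s₀ a - π₂ s₀ a| * P₂ s₀ a s
        + |ν₁ s₀ - ν₂ s₀| * π₂ s₀ a * P₂ s₀ a s) =
      (∑ s₀, ∑ a, ν₁ s₀ * π₁ s₀ a * ∑ s, |P₁ s₀ a s - P₂ s₀ a s|)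
      + (∑ s₀, ν₁ s₀ * ∑ a, |π₁ s₀ a - π₂ s₀ a|)
      + ∑ s₀, |ν₁ s₀ - ν₂ s₀| := by
    have hsw : ∑ s, ∑ s₀, ∑ a, (ν₁ s₀ * π₁ s₀ a * |P₁ s₀ a s - P₂ s₀ a s|
          + ν₁ s₀ * |π₁ s₀ a - π₂ s₀ a| * P₂ s₀ a s
          + |ν₁ s₀ - ν₂ s₀| * π₂ s₀ a * P₂ s₀ a s) =
        ∑ s₀, ∑ a, ∑ s, (ν₁ s₀ * π₁ s₀ a * |P₁ s₀ a s - P₂ s₀ a s|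
          + ν₁ s₀ * |π₁ s₀ a - π₂ s₀ a| * P₂ s₀ a s
          + |ν₁ s₀ - ν₂ s₀| * π₂ s₀ a * P₂ s₀ a s) := by
      rw [Finset.sum_comm]
      exact Finset.sum_congr rfl fun _ _ => Finset.sum_comm
    rw [hsw]
    have inner : ∀ s₀ a, ∑ s, (ν₁ s₀ * π₁ s₀ a * |P₁ s₀ a s - P₂ s₀ a s|
          + ν₁ s₀ * |π₁ s₀ a - π₂ s₀ a| * P₂ s₀ a s
          + |ν₁ s₀ - ν₂ s₀| * π₂ s₀ a * P₂ s₀ a s) =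
        ν₁ s₀ * π₁ s₀ a * (∑ s, |P₁ s₀ a s - P₂ s₀ a s|)
          + ν₁ s₀ * |π₁ s₀ a - π₂ s₀ a|
          + |ν₁ s₀ - ν₂ s₀| * π₂ s₀ a := by
      intro s₀ a
      rw [Finset.sum_add_distrib, Finset.sum_add_distrib,
        ← Finset.mul_sum, ← Finset.mul_sum, ← Finset.mul_sum, hP₂s, mul_one, mul_one]
    simp only [inner, Finset.sum_add_distrib]
    congr 1
    · congr 1
      exact Finset.sum_congr rfl fun s₀ _ => by rw [← Finset.mul_sum]
    · refine Finset.sum_congr rfl fun s₀ _ => ?_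
      rw [← Finset.mul_sum, hπ₂s, mul_one]
  calc (1 / 2) * ∑ s, |(∑ s₀, ∑ a, ν₁ s₀ * π₁ s₀ a * P₁ s₀ a s) -
        (∑ s₀, ∑ a, ν₂ s₀ * π₂ s₀ a * P₂ s₀ a s)|
      ≤ (1 / 2) * ∑ s, ∑ s₀, ∑ a, (ν₁ s₀ * π₁ s₀ a * |P₁ s₀ a s - P₂ s₀ a s|
          + ν₁ s₀ * |π₁ s₀ a - π₂ s₀ a| * P₂ s₀ a s
          + |ν₁ s₀ - ν₂ s₀| * π₂ s₀ a * P₂ s₀ a s) := by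
        gcongr
        exact key _
    _ = (∑ s₀, ∑ a, ν₁ s₀ * π₁ s₀ a * ((1 / 2) * ∑ s, |P₁ s₀ a s - P₂ s₀ a s|))
        + (∑ s₀, ν₁ s₀ * ((1 / 2) * ∑ a, |π₁ s₀ a - π₂ s₀ a|))
        + (1 / 2) * ∑ s₀, |ν₁ s₀ - ν₂ s₀| := by
        rw [h2]
        rw [mul_add, mul_add]
        congr 1
        · congr 1
          · rw [Finset.mul_sum]
            refine Finset.sum_congr rfl fun s₀ _ => ?_
            rw [Finset.mul_sum]
            exact Finset.sum_congr rfl fun a _ => by ring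
          · rw [Finset.mul_sum]
            exact Finset.sum_congr rfl fun s₀ _ => by ring
    _ ≤ εm + επ + (1 / 2) * ∑ s, |ν₁ s - ν₂ s| := by
        gcongr
        calc ∑ s₀, ν₁ s₀ * ((1 / 2) * ∑ a, |π₁ s₀ a - π₂ s₀ a|)
            ≤ ∑ s₀, ν₁ s₀ * επ :=
              Finset.sum_le_sum fun s₀ _ =>
                mul_le_mul_of_nonneg_left (hπ s₀) (hν₁ s₀)
          _ = επ := by rw [← Finset.sum_mul, hν₁s, one_mul]
end
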